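/- Let X be a lattice with an automorphism g of finite order. The fixed point set T^g of the induced action on T = Hom(X, ℂ×) has nonempty intersection with the compact torus T_u = Hom(X, S¹); indeed every connected component of T^g meets T_u. -/

import Mathlib

/-- The fixed point set `T^g ⊆ (ℂˣ)ⁿ ⊆ ℂⁿ` of the torus automorphism induced by a
lattice automorphism `g ∈ GL(n, ℤ)`. -/
def torusFixed (n : ℕ) (g : Matrix.GeneralLinearGroup (Fin n) ℤ) : Set (Fin n → ℂ) :=
  {t | (∀ i, t i ≠ 0) ∧
    ∀ i, (∏ j, t j ^ ((g : Matrix (Fin n) (Fin n) ℤ) i j)) = t i}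

/-!
The fixed point equations `∏ⱼ t_j ^ g_ij = t_i` are multiplicative, so taking absolute
values shows that `|t|` is again a fixed point, and so is every real power `|t| ^ (-r)`.
Hence `r ↦ t · |t| ^ (-r)` is a path in `T^g` from `t` (at `r = 0`) to its unitary part
`t / |t|` (at `r = 1`), which lies in the compact torus.
-/

open Set

/-- At `r = 1` this is the retraction `t ↦ t_u` of the polar decomposition `T = T_u × T_rs`. -/
noncomputable def polarHomotopy {ι : Type*} (t : ι → ℂ) (r : ℝ) : ι → ℂ :=
  fun i => t i * ((‖t i‖ ^ (-r) : ℝ) : ℂ)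

section polarHomotopy

variable {ι : Type*} (t : ι → ℂ)

@[simp]
theorem polarHomotopy_zero : polarHomotopy t 0 = t := by
  funext i; simp [polarHomotopy]

theorem norm_polarHomotopy_one {i : ι} (ht : t i ≠ 0) : ‖polarHomotopy t 1 i‖ = 1 := by
  have hpos : 0 < ‖t i‖ := norm_pos_iff.2 ht
  rw [polarHomotopy, norm_mul, Complex.norm_real, Real.norm_of_nonneg (by positivity),
    Real.rpow_neg_one, mul_inv_cancel₀ hpos.ne']

theorem polarHomotopy_ne_zero {i : ι} (ht : t i ≠ 0) (r : ℝ) : polarHomotopy t r i ≠ 0 :=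
  mul_ne_zero ht (Complex.ofReal_ne_zero.2 (Real.rpow_pos_of_pos (norm_pos_iff.2 ht) _).ne')

theorem continuous_polarHomotopy (ht : ∀ i, t i ≠ 0) : Continuous (polarHomotopy t) :=
  continuous_pi fun i => continuous_const.mul <| Complex.continuous_ofReal.comp <|
    (Real.continuous_const_rpow (norm_ne_zero_iff.2 (ht i))).comp continuous_neg

theorem prod_zpow_polarHomotopy (s : Finset ι) (a : ι → ℤ) (r : ℝ) :
    ∏ j ∈ s, polarHomotopy t r j ^ a j =
      (∏ j ∈ s, t j ^ a j) * (((∏ j ∈ s, ‖t j‖ ^ a j) ^ (-r) : ℝ) : ℂ) := by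
  have hcoord : ∀ j, (‖t j‖ ^ (-r)) ^ a j = (‖t j‖ ^ a j) ^ (-r) := fun j => by
    rw [← Real.rpow_intCast, ← Real.rpow_mul (norm_nonneg _), mul_comm,
      Real.rpow_mul (norm_nonneg _), Real.rpow_intCast]
  rw [← Real.finsetProd_rpow _ _ (fun j _ => by positivity), Complex.ofReal_prod,
    ← Finset.prod_mul_distrib]
  refine Finset.prod_congr rfl fun j _ => ?_
  rw [polarHomotopy, mul_zpow, ← hcoord, Complex.ofReal_zpow]

end polarHomotopy

theorem one_mem_torusFixed (n : ℕ) (g : Matrix.GeneralLinearGroup (Fin n) ℤ) :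
    1 ∈ torusFixed n g :=
  ⟨fun _ => one_ne_zero, fun _ => by simp⟩

theorem polarHomotopy_mem_torusFixed {n : ℕ} {g : Matrix.GeneralLinearGroup (Fin n) ℤ}
    {t : Fin n → ℂ} (ht : t ∈ torusFixed n g) (r : ℝ) : polarHomotopy t r ∈ torusFixed n g := by
  obtain ⟨ht0, htg⟩ := ht
  refine ⟨fun i => polarHomotopy_ne_zero t (ht0 i) r, fun i => ?_⟩
  have hnorm : ∏ j, ‖t j‖ ^ (g : Matrix (Fin n) (Fin n) ℤ) i j = ‖t i‖ := by
    simpa only [norm_prod, norm_zpow] using congrArg norm (htg i)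
  rw [prod_zpow_polarHomotopy, htg i, hnorm, polarHomotopy]

theorem fixedPoints_meet_compact_torus_general (n : ℕ)
    (g : Matrix.GeneralLinearGroup (Fin n) ℤ) :
    ((torusFixed n g) ∩ {t : Fin n → ℂ | ∀ i, ‖t i‖ = 1}).Nonempty ∧
    ∀ t ∈ torusFixed n g,
      ∃ s ∈ connectedComponentIn (torusFixed n g) t, ∀ i, ‖s i‖ = 1 := by
  refine ⟨⟨1, one_mem_torusFixed n g, fun _ => by simp⟩, fun t ht => ?_⟩
  have hpath : range (polarHomotopy t) ⊆ connectedComponentIn (torusFixed n g) t :=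
    (isPreconnected_range (continuous_polarHomotopy t ht.1)).subset_connectedComponentIn
      ⟨0, polarHomotopy_zero t⟩ (range_subset_iff.2 (polarHomotopy_mem_torusFixed ht))
  exact ⟨polarHomotopy t 1, hpath ⟨1, rfl⟩, fun i => norm_polarHomotopy_one t (ht.1 i)⟩

/-- For a finite order lattice automorphism `g` of `X = ℤⁿ`, the fixed point set `T^g`
of the induced action on `T = Hom(X, ℂˣ)` has nonempty intersection with the compact
torus `T_u = Hom(X, S¹)` (elements all of whose coordinates have absolute value `1`);
indeed every connected component of `T^g` meets `T_u`. -/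
theorem fixedPoints_meet_compact_torus (n : ℕ)
    (g : Matrix.GeneralLinearGroup (Fin n) ℤ) (hg : IsOfFinOrder g) :
    ((torusFixed n g) ∩ {t : Fin n → ℂ | ∀ i, ‖t i‖ = 1}).Nonempty ∧
    ∀ t ∈ torusFixed n g,
      ∃ s ∈ connectedComponentIn (torusFixed n g) t, ∀ i, ‖s i‖ = 1 :=
  fixedPoints_meet_compact_torus_general n g
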